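/- Let A be a torsion abelian group (every element of A has finite order). If the endomorphism ring End(A) is centrally essential, then End(A) is commutative. -/

import Mathlib

/-- A ring `R` is centrally essential if for every nonzero `a : R` there exist
nonzero central elements `x, y` with `a * x = y`. -/
def IsCentrallyEssential (R : Type*) [Ring R] : Prop :=
  ∀ a : R, a ≠ 0 → ∃ x y : R, x ∈ Set.center R ∧ y ∈ Set.center R ∧
    x ≠ 0 ∧ y ≠ 0 ∧ a * x = y

/-!
Idempotents of a centrally essential ring are central, so every direct summand of `A` is fully
invariant. For a prime `p` this forces the socle `A[p] = {a | p • a = 0}` to be cyclic. If some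
nonzero `s ∈ A[p]` has finite height `n`, then `s = p ^ n • b` where `⟨b⟩` is pure, hence a direct
summand, and full invariance puts all of `A[p]` into `⟨b⟩`. Otherwise `s` is the bottom of a
Prüfer chain spanning a divisible, hence direct, summand `D` with `D[p] = ⟨s⟩`, and full invariance
puts `A[p]` into `D`. With a cyclic socle the cyclic `p`-subgroups form a chain, so every
endomorphism maps an element `a` of `p`-power order into `⟨a⟩`; splitting torsion elements into
primary parts gives `φ a ∈ ⟨a⟩` for every `a`, and endomorphisms acting on each element as an
integer commute.
-/

open AddSubgroup

namespace IsCentrallyEssential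

variable {R : Type*} [Ring R]

theorem eq_zero_of_mul_eq_self_of_mul_eq_zero (hR : IsCentrallyEssential R) {e a : R}
    (hea : e * a = a) (hae : a * e = 0) : a = 0 := by
  by_contra ha
  obtain ⟨x, y, hx, hy, -, hy0, rfl⟩ := hR a ha
  apply hy0
  calc a * x = e * (a * x) := by rw [← mul_assoc, hea]
    _ = a * x * e := (Semigroup.mem_center_iff.mp hy) e
    _ = a * e * x := by rw [mul_assoc, ← (Semigroup.mem_center_iff.mp hx) e, mul_assoc]
    _ = 0 := by rw [hae, zero_mul]

theorem mul_mul_one_sub_eq_zero (hR : IsCentrallyEssential R) {e : R}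
    (he : IsIdempotentElem e) (f : R) : e * f * (1 - e) = 0 :=
  hR.eq_zero_of_mul_eq_self_of_mul_eq_zero (e := e)
    (by rw [← mul_assoc, ← mul_assoc, he.eq]) (by rw [mul_assoc, sub_mul, he.eq]; simp)

theorem mem_center_of_isIdempotentElem (hR : IsCentrallyEssential R) {e : R}
    (he : IsIdempotentElem e) : e ∈ Set.center R := by
  refine Semigroup.mem_center_iff.mpr fun f => ?_
  have h₁ := hR.mul_mul_one_sub_eq_zero he f
  have h₂ := hR.mul_mul_one_sub_eq_zero he.one_sub f
  rw [sub_sub_cancel] at h₂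
  calc f * e = e * f * e := by rw [sub_mul, sub_mul, one_mul, sub_eq_zero] at h₂; exact h₂
    _ = e * f := by rw [mul_sub, mul_one, sub_eq_zero] at h₁; exact h₁.symm

end IsCentrallyEssential

def HasCyclicSocle (A : Type*) [AddCommGroup A] (p : ℕ) : Prop :=
  ∃ s : A, p • s = 0 ∧ ∀ v : A, p • v = 0 → v ∈ zmultiples s

section

variable {A : Type*} [AddCommGroup A]

noncomputable def zmodMultiplesHom (n : ℕ) (w : A) (hw : n • w = 0) : ZMod n →+ A :=
  ZMod.lift n ⟨zmultiplesHom A w, by simpa using hw⟩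

theorem zmodMultiplesHom_intCast {n : ℕ} {w : A} (hw : n • w = 0) (k : ℤ) :
    zmodMultiplesHom n w hw k = k • w := by
  simp [zmodMultiplesHom]

theorem zmodMultiplesHom_one {n : ℕ} {w : A} (hw : n • w = 0) : zmodMultiplesHom n w hw 1 = w := by
  simpa using zmodMultiplesHom_intCast hw 1

theorem zmodMultiplesHom_mem_zmultiples {n : ℕ} {w : A} (hw : n • w = 0) (z : ZMod n) :
    zmodMultiplesHom n w hw z ∈ zmultiples w := by
  obtain ⟨k, rfl⟩ := ZMod.intCast_surjective z
  rw [zmodMultiplesHom_intCast]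
  exact zsmul_mem (mem_zmultiples w) k

theorem exists_addMonoidHom_apply_eq {Q : Type*} [AddCommGroup Q] [DivisibleBy Q ℤ] (w : A)
    (q : Q) (hq : addOrderOf w • q = 0) : ∃ f : A →+ Q, f w = q := by
  have hi : Function.Injective (zmodMultiplesHom _ w (addOrderOf_nsmul_eq_zero w)) :=
    (ZMod.lift_injective _).mpr fun m hm => (ZMod.intCast_zmod_eq_zero_iff_dvd m _).mpr
      (addOrderOf_dvd_iff_zsmul_eq_zero.mpr hm)
  obtain ⟨f, hf⟩ := (Module.Baer.of_divisible Q).extension_property_addMonoidHom _ hi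
    (zmodMultiplesHom _ q hq)
  refine ⟨f, ?_⟩
  simpa only [AddMonoidHom.comp_apply, zmodMultiplesHom_one] using congr($hf 1)

theorem ZMod.mem_range_toAddCircle {n : ℕ} [NeZero n] {u : UnitAddCircle} (hu : n • u = 0) :
    u ∈ (ZMod.toAddCircle : ZMod n →+ UnitAddCircle).range := by
  induction u using QuotientAddGroup.induction_on with | _ x => ?_
  obtain ⟨k, hk⟩ := (AddCircle.coe_eq_zero_iff (1 : ℝ)).mp (by rwa [← AddCircle.coe_nsmul] at hu)
  refine ⟨k, ?_⟩
  rw [ZMod.toAddCircle_intCast]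
  congr 1
  have : (n : ℝ) ≠ 0 := Nat.cast_ne_zero.mpr (NeZero.ne n)
  field_simp
  simpa using hk

theorem exists_addMonoidHom_zmod_apply_eq_one {n : ℕ} [NeZero n] {b : A}
    (hb : ∀ (t : ℤ) (y : A), t • b = n • y → (n : ℤ) ∣ t) : ∃ χ : A →+ ZMod n, χ b = 1 := by
  -- Extend `b ↦ 1 / n` from `A ⧸ n • A` to the divisible group `ℝ ⧸ ℤ`; the values are
  -- `n`-torsion, i.e. lie in the copy of `ZMod n`.
  let π := QuotientAddGroup.mk' (nsmulAddMonoidHom n : A →+ A).range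
  have hπ : ∀ x : A, π (n • x) = 0 := fun x =>
    (QuotientAddGroup.eq_zero_iff _).mpr ⟨x, rfl⟩
  have hπb : n ∣ addOrderOf (π b) := by
    obtain ⟨y, hy⟩ := (QuotientAddGroup.eq_zero_iff _).mp
      (by rw [map_nsmul]; exact addOrderOf_nsmul_eq_zero (π b) : π (addOrderOf (π b) • b) = 0)
    exact Int.natCast_dvd_natCast.mp (hb _ y (by simpa using hy.symm))
  obtain ⟨G, hG⟩ := exists_addMonoidHom_apply_eq (π b) (ZMod.toAddCircle (1 : ZMod n)) (by
    rw [← map_nsmul, nsmul_one, (ZMod.natCast_eq_zero_iff _ _).mpr hπb, map_zero])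
  have hrange : ∀ x, G (π x) ∈ (ZMod.toAddCircle : ZMod n →+ _).range := fun x =>
    ZMod.mem_range_toAddCircle (by rw [← map_nsmul, ← map_nsmul, hπ, map_zero])
  refine ⟨(AddMonoidHom.ofInjective (ZMod.toAddCircle_injective n)).symm.toAddMonoidHom.comp
    ((G.comp π).codRestrict _ hrange), ZMod.toAddCircle_injective n ?_⟩
  simp [hG]

theorem HasCyclicSocle.mem_zmultiples_of_nsmul_eq_zero {p : ℕ} (hsoc : HasCyclicSocle A p)
    (hp : p.Prime) {a c : A} (ha : p • a = 0) (ha0 : a ≠ 0) (hc : p • c = 0) :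
    c ∈ zmultiples a := by
  obtain ⟨s, hs, hsoc⟩ := hsoc
  obtain ⟨i, rfl⟩ := mem_zmultiples_iff.mp (hsoc a ha)
  have hpi : ¬(p : ℤ) ∣ i := by
    rintro ⟨j, rfl⟩
    exact ha0 (by rw [mul_comm, mul_zsmul, natCast_zsmul, hs, smul_zero])
  obtain ⟨α, β, hαβ⟩ := (Nat.prime_iff_prime_int.mp hp).coprime_iff_not_dvd.mpr hpi
  have hsi : β • i • s = s := by
    calc β • i • s = (α * p + β * i) • s := by
          rw [add_zsmul, mul_zsmul, natCast_zsmul, hs, smul_zero, zero_add, mul_zsmul]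
      _ = s := by rw [hαβ, one_zsmul]
  have := zsmul_mem (mem_zmultiples (i • s)) β
  rw [hsi] at this
  exact zmultiples_le.mpr this (hsoc c hc)

theorem HasCyclicSocle.mem_zmultiples_of_pow_succ_nsmul_eq_zero {p : ℕ}
    (hsoc : HasCyclicSocle A p) (hp : p.Prime) :
    ∀ (k : ℕ) {a c : A}, p ^ k • a ≠ 0 → p ^ (k + 1) • a = 0 → p ^ (k + 1) • c = 0 →
      c ∈ zmultiples a
  | 0, a, c, ha0, ha, hc => by
    rw [pow_zero, one_smul] at ha0
    rw [zero_add, pow_one] at ha hc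
    exact hsoc.mem_zmultiples_of_nsmul_eq_zero hp ha ha0 hc
  | k + 1, a, c, ha0, ha, hc => by
    have hs : p • p ^ (k + 1) • a = 0 := by rwa [smul_smul, ← pow_succ']
    obtain ⟨t, ht⟩ := mem_zmultiples_iff.mp (hsoc.mem_zmultiples_of_nsmul_eq_zero hp hs ha0
      (by rwa [smul_smul, ← pow_succ']))
    have hct : c - t • a ∈ zmultiples (p • a) :=
      hsoc.mem_zmultiples_of_pow_succ_nsmul_eq_zero hp k
        (by rwa [smul_smul, ← pow_succ]) (by rwa [smul_smul, ← pow_succ])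
        (by rw [smul_sub, ← ht, smul_comm, sub_self])
    have hpa : zmultiples (p • a) ≤ zmultiples a :=
      zmultiples_le.mpr (nsmul_mem (mem_zmultiples a) p)
    simpa using add_mem (hpa hct) (zsmul_mem (mem_zmultiples a) t)

theorem HasCyclicSocle.apply_mem_zmultiples {p : ℕ} (hsoc : HasCyclicSocle A p) (hp : p.Prime)
    (φ : AddMonoid.End A) {a : A} {k : ℕ} (ha : p ^ k • a = 0) : φ a ∈ zmultiples a := by
  obtain ⟨_ | j, -, hj⟩ := (Nat.dvd_prime_pow hp).mp (addOrderOf_dvd_of_nsmul_eq_zero ha)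
  · rw [pow_zero, AddMonoid.addOrderOf_eq_one_iff] at hj
    rw [hj, map_zero]
    exact zero_mem _
  have hj0 : p ^ j • a ≠ 0 := nsmul_ne_zero_of_lt_addOrderOf (pow_ne_zero _ hp.ne_zero)
    (hj ▸ Nat.pow_lt_pow_right hp.one_lt j.lt_succ_self)
  have hja : p ^ (j + 1) • a = 0 := hj ▸ addOrderOf_nsmul_eq_zero a
  exact hsoc.mem_zmultiples_of_pow_succ_nsmul_eq_zero hp j hj0 hja
    (by rw [← map_nsmul, hja, map_zero])

theorem IsCentrallyEssential.mem_zmultiples_of_retract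
    (hA : IsCentrallyEssential (AddMonoid.End A)) {n : ℕ} {b : A} (hb : n • b = 0)
    (χ : A →+ ZMod n) (hχ : χ b = 1) {v : A} (hv : n • v = 0) : v ∈ zmultiples b := by
  let ρ : A →+ A := (zmodMultiplesHom n b hb).comp χ
  let f : A →+ A := (zmodMultiplesHom n v hv).comp χ
  have hχρ : ∀ z, χ (zmodMultiplesHom n b hb z) = z := by
    intro z
    obtain ⟨k, rfl⟩ := ZMod.intCast_surjective z
    rw [zmodMultiplesHom_intCast, map_zsmul, hχ, zsmul_one]
  have hρ : IsIdempotentElem (show AddMonoid.End A from ρ) := AddMonoidHom.ext fun x =>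
    show ρ (ρ x) = ρ x by simp only [ρ, AddMonoidHom.comp_apply, hχρ]
  -- `ρ` is an idempotent onto `⟨b⟩`, and central, so `v = f (ρ b) = ρ (f b) ∈ ⟨b⟩`.
  have hcomm : f (ρ b) = ρ (f b) :=
    congr($((Semigroup.mem_center_iff.mp (hA.mem_center_of_isIdempotentElem hρ)) f) b)
  simp only [ρ, f, AddMonoidHom.comp_apply, hχ, zmodMultiplesHom_one] at hcomm
  rw [hcomm]
  exact zmodMultiplesHom_mem_zmultiples hb _

theorem IsCentrallyEssential.mem_of_divisibleBy (hA : IsCentrallyEssential (AddMonoid.End A))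
    {p : ℕ} (hp : p.Prime) (D : AddSubgroup A) [DivisibleBy D ℤ] {s : A} (hsD : s ∈ D)
    (hs : p • s = 0) (hs0 : s ≠ 0) {v : A} (hv : p • v = 0) : v ∈ D := by
  have : Fact p.Prime := ⟨hp⟩
  obtain ⟨π, hπ⟩ := (Module.Baer.of_divisible D).extension_property_addMonoidHom D.subtype
    Subtype.val_injective (AddMonoidHom.id D)
  let e : A →+ A := D.subtype.comp π
  have heD : ∀ x ∈ D, e x = x := fun x hx => congr(($hπ ⟨x, hx⟩ : A))
  have he : IsIdempotentElem (show AddMonoid.End A from e) :=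
    AddMonoidHom.ext fun x => heD _ (π x).2
  -- Otherwise some `f` maps `v - e v ∈ ker e` to `s ∈ range e`, which a central `e` forbids.
  by_contra hvD
  have hw0 : v - e v ≠ 0 := fun h => hvD (sub_eq_zero.mp h ▸ (π v).2)
  obtain ⟨f, hf⟩ := exists_addMonoidHom_apply_eq (v - e v) (⟨s, hsD⟩ : D) (by
    rw [addOrderOf_eq_prime (by rw [smul_sub, hv, ← map_nsmul, hv, map_zero, sub_zero]) hw0]
    exact Subtype.ext hs)
  have hcomm : D.subtype (f (e (v - e v))) = e (D.subtype (f (v - e v))) :=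
    congr($((Semigroup.mem_center_iff.mp (hA.mem_center_of_isIdempotentElem he))
      (D.subtype.comp f)) (v - e v))
  have hee : e (e v) = e v := heD _ (π v).2
  rw [map_sub, hee, sub_self, map_zero, map_zero, hf, AddSubgroup.subtype_apply,
    heD s hsD] at hcomm
  exact hs0 hcomm.symm

theorem dvd_of_zsmul_eq_pow_succ_nsmul {p : ℕ} (hp : p.Prime) {n : ℕ} {b : A}
    (hb : ¬∃ y : A, p ^ (n + 1) • y = p ^ n • b) {t : ℤ} {y : A}
    (hty : t • b = p ^ (n + 1) • y) : ((p ^ (n + 1) : ℕ) : ℤ) ∣ t := by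
  -- If `gcd t M = p ^ j` with `j ≤ n`, then `p ^ j • b ∈ M • A` and so `p ^ n • b ∈ M • A`.
  set M := p ^ (n + 1)
  obtain ⟨j, hj, hgcd⟩ := (Nat.dvd_prime_pow hp).mp
    (Int.natCast_dvd_natCast.mp (Int.gcd_dvd_right t (M : ℤ)))
  rcases hj.eq_or_lt with rfl | hjn
  · have := Int.gcd_dvd_left t M
    rwa [hgcd] at this
  refine absurd ⟨(p ^ (n - j)) • (t.gcdA M • y + t.gcdB M • b), ?_⟩ hb
  have hjb : p ^ j • b = M • (t.gcdA M • y + t.gcdB M • b) := by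
    rw [← natCast_zsmul, ← hgcd, Int.gcd_eq_gcd_ab, add_zsmul, mul_comm, mul_zsmul, hty,
      mul_comm, mul_zsmul, natCast_zsmul, smul_add, smul_comm M, smul_comm M]
  rw [smul_comm, ← hjb, smul_smul, ← pow_add, Nat.sub_add_cancel (by omega)]

theorem mem_zmultiples_pow_nsmul_of_mem_zmultiples {p : ℕ} (hp : p.Prime) {n : ℕ} {b v : A}
    (hb0 : p ^ n • b ≠ 0) (hb : p ^ (n + 1) • b = 0) (hvb : v ∈ zmultiples b) (hv : p • v = 0) :
    v ∈ zmultiples (p ^ n • b) := by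
  have : Fact p.Prime := ⟨hp⟩
  obtain ⟨t, rfl⟩ := mem_zmultiples_iff.mp hvb
  obtain ⟨t', rfl⟩ : (p : ℤ) ^ n ∣ t := by
    have := addOrderOf_dvd_iff_zsmul_eq_zero.mpr
      (show (p * t) • b = 0 by rw [mul_zsmul, natCast_zsmul, hv])
    rw [addOrderOf_eq_prime_pow hb0 hb, Nat.cast_pow, pow_succ'] at this
    exact (mul_dvd_mul_iff_left (by exact_mod_cast hp.ne_zero)).mp this
  rw [mul_comm, mul_zsmul, ← natCast_zsmul, Nat.cast_pow]
  exact zsmul_mem (mem_zmultiples _) t'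

theorem IsCentrallyEssential.hasCyclicSocle_of_not_exists_pow_succ_nsmul_eq
    (hA : IsCentrallyEssential (AddMonoid.End A)) {p : ℕ} (hp : p.Prime) {n : ℕ} {b : A}
    (hb : p ^ (n + 1) • b = 0) (hheight : ¬∃ y : A, p ^ (n + 1) • y = p ^ n • b) :
    HasCyclicSocle A p := by
  have : NeZero (p ^ (n + 1)) := ⟨pow_ne_zero _ hp.ne_zero⟩
  obtain ⟨χ, hχ⟩ := exists_addMonoidHom_zmod_apply_eq_one fun t y =>
    dvd_of_zsmul_eq_pow_succ_nsmul hp hheight (t := t) (y := y)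
  refine ⟨p ^ n • b, by rwa [smul_smul, ← pow_succ'], fun v hv => ?_⟩
  refine mem_zmultiples_pow_nsmul_of_mem_zmultiples hp
    (fun h0 => hheight ⟨0, by rw [smul_zero, h0]⟩) hb ?_ hv
  exact hA.mem_zmultiples_of_retract hb χ hχ (by rw [pow_succ', mul_nsmul, hv, nsmul_zero])

theorem exists_nsmul_eq_of_pow_nsmul_eq_zero {p : ℕ}
    (hdiv : ∀ v : A, p • v = 0 → ∀ n : ℕ, ∃ y : A, p ^ n • y = v) :
    ∀ (k : ℕ) {c : A}, p ^ k • c = 0 → ∃ c' : A, p ^ (k + 1) • c' = 0 ∧ p • c' = c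
  | 0, c, hc => ⟨0, smul_zero _, by rw [pow_zero, one_smul] at hc; rw [hc, smul_zero]⟩
  | k + 1, c, hc => by
    obtain ⟨x, hx⟩ := hdiv (p ^ k • c) (by rwa [smul_smul, ← pow_succ']) (k + 1)
    obtain ⟨c', hc'p, hc'⟩ := exists_nsmul_eq_of_pow_nsmul_eq_zero hdiv k (c := c - p • x)
      (by rw [smul_sub, smul_smul, ← pow_succ, hx, sub_self])
    refine ⟨x + c', ?_, by rw [smul_add, hc', add_sub_cancel]⟩
    rw [pow_succ, mul_nsmul, smul_add, hx, hc'p, add_zero, smul_smul, ← pow_succ', hc]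

theorem exists_seq_nsmul_succ_eq {p : ℕ}
    (hdiv : ∀ v : A, p • v = 0 → ∀ n : ℕ, ∃ y : A, p ^ n • y = v) {s : A} (hs : p • s = 0) :
    ∃ u : ℕ → A, u 0 = s ∧ ∀ i, p • u (i + 1) = u i ∧ p ^ (i + 1) • u i = 0 := by
  choose F hF using fun i (c : {c : A // p ^ (i + 1) • c = 0}) =>
    exists_nsmul_eq_of_pow_nsmul_eq_zero hdiv (i + 1) c.2
  let u : (i : ℕ) → {c : A // p ^ (i + 1) • c = 0} := fun i =>
    Nat.rec (motive := fun i => {c : A // p ^ (i + 1) • c = 0}) ⟨s, by simpa using hs⟩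
      (fun i c => ⟨F i c, (hF i c).1⟩) i
  refine ⟨fun i => (u i).val, rfl, fun i => ⟨?_, ?_⟩⟩
  · exact (hF i (u i)).2
  · exact (u i).2

theorem AddSubgroup.exists_mem_nsmul_eq {p : ℕ} (hp : p.Prime) {D : AddSubgroup A}
    (htor : ∀ x ∈ D, ∃ k : ℕ, p ^ k • x = 0) (hdiv : ∀ x ∈ D, ∃ y ∈ D, p • y = x) {n : ℕ}
    (hn : n ≠ 0) : ∀ x ∈ D, ∃ y ∈ D, n • y = x := by
  induction n using Nat.recOnMul with
  | zero => exact absurd rfl hn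
  | one => exact fun x hx => ⟨x, hx, one_nsmul x⟩
  | prime q hq =>
    intro x hx
    rcases eq_or_ne q p with rfl | hqp
    · exact hdiv x hx
    obtain ⟨k, hk⟩ := htor x hx
    obtain ⟨α, β, hαβ⟩ := (((Nat.coprime_primes hq hp).mpr hqp).pow_right k).isCoprime
    refine ⟨α • x, zsmul_mem hx α, ?_⟩
    calc q • α • x = (α * q + β * (p ^ k : ℕ)) • x - β • (p ^ k • x) := by
          rw [add_zsmul, mul_zsmul, mul_zsmul, natCast_zsmul, natCast_zsmul, smul_comm q α,
            add_sub_cancel_right]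
      _ = x := by rw [hαβ, one_zsmul, hk, smul_zero, sub_zero]
  | mul a b iha ihb =>
    intro x hx
    obtain ⟨y, hy, rfl⟩ := iha (left_ne_zero_of_mul hn) x hx
    obtain ⟨z, hz, rfl⟩ := ihb (right_ne_zero_of_mul hn) y hy
    exact ⟨z, hz, by rw [mul_comm, mul_nsmul]⟩

theorem exists_divisibleBy_addSubgroup_of_forall_exists_pow_nsmul_eq {p : ℕ} (hp : p.Prime)
    (hdiv : ∀ v : A, p • v = 0 → ∀ n : ℕ, ∃ y : A, p ^ n • y = v) {s : A} (hs : p • s = 0)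
    (hs0 : s ≠ 0) : ∃ D : AddSubgroup A, s ∈ D ∧ Nonempty (DivisibleBy D ℤ) ∧
      ∀ v ∈ D, p • v = 0 → v ∈ zmultiples s := by
  obtain ⟨u, hu0, hu⟩ := exists_seq_nsmul_succ_eq hdiv hs
  have hpow : ∀ i, p ^ i • u i = s := fun i => by
    induction i with
    | zero => rw [pow_zero, one_smul, hu0]
    | succ i ih => rw [pow_succ', mul_nsmul, (hu i).1, ih]
  have hmono : Monotone fun i => zmultiples (u i) := monotone_nat_of_le_succ fun i =>
    zmultiples_le.mpr ((hu i).1 ▸ nsmul_mem (mem_zmultiples _) p)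
  let D := ⨆ i, zmultiples (u i)
  have hmem : ∀ {x}, x ∈ D ↔ ∃ i, x ∈ zmultiples (u i) := mem_iSup_of_directed hmono.directed_le
  have hD : ∀ {n : ℕ}, n ≠ 0 → Function.Surjective fun x : D => n • x := fun hn ⟨x, hx⟩ => by
    obtain ⟨y, hy, hyx⟩ := exists_mem_nsmul_eq hp (D := D)
      (fun x hx => by
        obtain ⟨i, hi⟩ := hmem.mp hx
        obtain ⟨t, rfl⟩ := mem_zmultiples_iff.mp hi
        exact ⟨i + 1, by rw [smul_comm, (hu i).2, smul_zero]⟩)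
      (fun x hx => by
        obtain ⟨i, hi⟩ := hmem.mp hx
        obtain ⟨t, rfl⟩ := mem_zmultiples_iff.mp hi
        exact ⟨t • u (i + 1), hmem.mpr ⟨i + 1, zsmul_mem (mem_zmultiples _) t⟩,
          by rw [smul_comm, (hu i).1]⟩)
      hn x hx
    exact ⟨⟨y, hy⟩, Subtype.ext hyx⟩
  let : DivisibleBy D ℕ := divisibleByOfSMulRightSurj D ℕ hD
  refine ⟨D, hmem.mpr ⟨0, hu0 ▸ mem_zmultiples _⟩, ⟨AddGroup.divisibleByIntOfDivisibleByNat D⟩,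
    fun v hvD hv => ?_⟩
  obtain ⟨i, hi⟩ := hmem.mp hvD
  rw [← hpow i]
  exact mem_zmultiples_pow_nsmul_of_mem_zmultiples hp (by rwa [hpow]) (hu i).2 hi hv

theorem IsCentrallyEssential.hasCyclicSocle_of_forall_exists_pow_nsmul_eq
    (hA : IsCentrallyEssential (AddMonoid.End A)) {p : ℕ} (hp : p.Prime)
    (hdiv : ∀ v : A, p • v = 0 → ∀ n : ℕ, ∃ y : A, p ^ n • y = v) : HasCyclicSocle A p := by
  rcases em (∃ s : A, p • s = 0 ∧ s ≠ 0) with ⟨s, hs, hs0⟩ | hsoc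
  · obtain ⟨D, hsD, ⟨_⟩, hDs⟩ :=
      exists_divisibleBy_addSubgroup_of_forall_exists_pow_nsmul_eq hp hdiv hs hs0
    exact ⟨s, hs, fun v hv => hDs v (hA.mem_of_divisibleBy hp D hsD hs hs0 hv) hv⟩
  · refine ⟨0, smul_zero _, fun v hv => ?_⟩
    obtain rfl : v = 0 := not_not.mp fun hv0 => hsoc ⟨v, hv, hv0⟩
    exact zero_mem _

theorem IsCentrallyEssential.hasCyclicSocle (hA : IsCentrallyEssential (AddMonoid.End A))
    {p : ℕ} (hp : p.Prime) : HasCyclicSocle A p := by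
  by_cases hdiv : ∀ v : A, p • v = 0 → ∀ n : ℕ, ∃ y : A, p ^ n • y = v
  · exact hA.hasCyclicSocle_of_forall_exists_pow_nsmul_eq hp hdiv
  obtain ⟨v, hv, n, hn⟩ : ∃ v : A, p • v = 0 ∧ ∃ n : ℕ, ∀ y : A, p ^ n • y ≠ v := by
    simpa using hdiv
  obtain ⟨m, ⟨b, rfl⟩, hm⟩ : ∃ m, (∃ b : A, p ^ m • b = v) ∧ ¬∃ y : A, p ^ (m + 1) • y = v := by
    by_contra! H
    have : ∀ m, ∃ b : A, p ^ m • b = v := fun m =>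
      m.rec ⟨v, by rw [pow_zero, one_smul]⟩ fun m ih => H m ih
    exact hn _ (this n).choose_spec
  exact hA.hasCyclicSocle_of_not_exists_pow_succ_nsmul_eq hp
    (by rwa [smul_smul, ← pow_succ'] at hv) hm

theorem apply_mem_zmultiples_of_forall_prime {φ : AddMonoid.End A}
    (hφ : ∀ p : ℕ, p.Prime → ∀ (k : ℕ) (a : A), p ^ k • a = 0 → φ a ∈ zmultiples a) :
    ∀ {n : ℕ}, n ≠ 0 → ∀ a : A, n • a = 0 → φ a ∈ zmultiples a := by
  intro n
  induction n using Nat.recOnPosPrimePosCoprime with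
  | prime_pow p k hp _ => exact fun _ => hφ p hp k
  | zero => exact fun h => absurd rfl h
  | one =>
    intro _ a ha
    rw [one_smul] at ha
    rw [ha, map_zero]
    exact zero_mem _
  | coprime m n _ _ hmn ihm ihn =>
    intro hmn0 a ha
    obtain ⟨α, β, hαβ⟩ := hmn.isCoprime
    have hma := ihn (right_ne_zero_of_mul hmn0) (m • a) (by rwa [smul_comm, ← mul_nsmul'])
    have hna := ihm (left_ne_zero_of_mul hmn0) (n • a) (by rwa [← mul_nsmul'])
    have hle : ∀ l : ℕ, zmultiples (l • a) ≤ zmultiples a := fun l =>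
      zmultiples_le.mpr (nsmul_mem (mem_zmultiples a) l)
    have ha' : a = α • m • a + β • n • a := by
      rw [← natCast_zsmul, ← natCast_zsmul, smul_smul, smul_smul, ← add_zsmul, hαβ, one_zsmul]
    have := add_mem (zsmul_mem (hle m hma) α) (zsmul_mem (hle n hna) β)
    rwa [← map_zsmul, ← map_zsmul, ← map_add, ← ha'] at this

theorem AddMonoid.End.mul_comm_of_forall_apply_mem_zmultiples
    (h : ∀ (φ : AddMonoid.End A) (a : A), φ a ∈ zmultiples a) (f g : AddMonoid.End A) :
    f * g = g * f := by
  ext a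
  obtain ⟨i, hi⟩ := mem_zmultiples_iff.mp (h g a)
  obtain ⟨j, hj⟩ := mem_zmultiples_iff.mp (h f a)
  change f (g a) = g (f a)
  rw [← hi, ← hj, map_zsmul, map_zsmul, ← hi, ← hj, smul_comm]

end

/-- if the endomorphism ring of a torsion abelian group is centrally
essential, then it is commutative. -/
theorem comm_of_isCentrallyEssential_end_of_torsion
    (A : Type*) [AddCommGroup A]
    (htor : ∀ a : A, ∃ n : ℕ, 0 < n ∧ n • a = 0)
    (h : IsCentrallyEssential (AddMonoid.End A)) :
    ∀ f g : AddMonoid.End A, f * g = g * f := by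
  refine AddMonoid.End.mul_comm_of_forall_apply_mem_zmultiples fun φ a => ?_
  obtain ⟨n, hn, hna⟩ := htor a
  exact apply_mem_zmultiples_of_forall_prime
    (fun p hp _ _ hk => (h.hasCyclicSocle hp).apply_mem_zmultiples hp φ hk) hn.ne' a hna
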